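/- Let X be a subshift over a finite alphabet A ⊆ ℤ, let v ∈ ℤ² be nonzero, and let u ∈ ℤ² be nonzero with ⟨u, v⟩ = 0. Let k > |⟨u^⊥, v⟩| be such that the box B = B_u^k determines cell 0 in X, i.e., for all d, e ∈ X, d|_B = e|_B implies d(0) = e(0). Then for all d, e ∈ X satisfying τ^v(d) − d = τ^v(e) − e: if d|_B = e|_B then d|_{H_{−u}} = e|_{H_{−u}}. -/

import Mathlib

/-- Translation of a configuration by `t`: `(Translate t c) n = c (n - t)`. -/
def Translate {A : Type*} (t : ℤ × ℤ) (c : ℤ × ℤ → A) : ℤ × ℤ → A :=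
  fun n => c (n - t)

/-- The orbit of a configuration: the set of all its translates. -/
def orbit {A : Type*} (c : ℤ × ℤ → A) : Set (ℤ × ℤ → A) :=
  { d | ∃ t : ℤ × ℤ, d = Translate t c }

/-- The orbit closure: the topological closure of the orbit (in the product
topology of the discrete topology on the alphabet). -/
def orbitClosure {A : Type*} [TopologicalSpace A] (c : ℤ × ℤ → A) : Set (ℤ × ℤ → A) :=
  closure (orbit c)

/-- The standard inner product on `ℤ²`. -/
def inner2 (x u : ℤ × ℤ) : ℤ := x.1 * u.1 + x.2 * u.2

/-- The discrete half plane in direction `u`. -/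
def halfPlane (u : ℤ × ℤ) : Set (ℤ × ℤ) := { x | inner2 x u < 0 }

/-- A set of configurations is deterministic in direction `u`: the contents of a
configuration on the half plane `H_u` determine the whole configuration. -/
def DeterministicIn {A : Type*} (X : Set (ℤ × ℤ → A)) (u : ℤ × ℤ) : Prop :=
  ∀ d ∈ X, ∀ e ∈ X, Set.EqOn d e (halfPlane u) → d = e

/-- The set of `D`-patterns appearing in `c` : restrictions of translates of `c` to `D`. -/
def patterns {A : Type*} (c : ℤ × ℤ → A) (D : Set (ℤ × ℤ)) : Set (D → A) :=
  { p | ∃ t : ℤ × ℤ, ∀ x : D, p x = Translate t c x }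

/-- A configuration is periodic if it is fixed by some non-trivial translation. -/
def Periodic {A : Type*} (c : ℤ × ℤ → A) : Prop :=
  ∃ t : ℤ × ℤ, t ≠ 0 ∧ Translate t c = c

/-- The discrete rectangle `{1,…,n} × {1,…,m}`. -/
def rect (n m : ℕ) : Set (ℤ × ℤ) :=
  { x | 1 ≤ x.1 ∧ x.1 ≤ (n : ℤ) ∧ 1 ≤ x.2 ∧ x.2 ≤ (m : ℤ) }

/-- The difference operator `τ^v - id`, corresponding to multiplication by the
Laurent polynomial `x^v - 1`. -/
def diffOp (v : ℤ × ℤ) (d : ℤ × ℤ → ℤ) : ℤ × ℤ → ℤ := fun n => d (n - v) - d n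

/-- Perpendicular vector: `(n,m)^⊥ = (m,−n)`. -/
def perp (u : ℤ × ℤ) : ℤ × ℤ := (u.2, -u.1)

/-- The discrete box `B_u^k`. -/
def Box (u : ℤ × ℤ) (k : ℤ) : Set (ℤ × ℤ) :=
  { x | -k < inner2 x u ∧ inner2 x u < 0 ∧ -k < inner2 x (perp u) ∧ inner2 x (perp u) < k }

/-- A subshift: a set of configurations closed in the product topology and closed
under translations. -/
def IsSubshift {A : Type*} [TopologicalSpace A] (X : Set (ℤ × ℤ → A)) : Prop :=
  IsClosed X ∧ ∀ c ∈ X, ∀ t : ℤ × ℤ, Translate t c ∈ X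


/-!
Since `⟨u, v⟩ = 0`, translating by `v` moves along the strip `-k < ⟨x, u⟩ < 0` by the step
`⟨u^⊥, v⟩`, which is nonzero and shorter than the box `B`, so every point of the strip is a
multiple of `v` away from a point of `B`. The difference `d - e` is `v`-periodic, hence vanishes
on the whole strip. Then `d` and `e` agree on the strip shifted up by one level at a time: a cell
at level `N ≥ 0` sees, through its translate of `B`, only cells of levels in `(N - k, N)`.
-/

lemma inner2_comm (x y : ℤ × ℤ) : inner2 x y = inner2 y x := by
  unfold inner2; ring

lemma inner2_add_left (x y w : ℤ × ℤ) : inner2 (x + y) w = inner2 x w + inner2 y w := by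
  simp only [inner2, Prod.fst_add, Prod.snd_add]; ring

lemma inner2_zsmul_left (m : ℤ) (x w : ℤ × ℤ) : inner2 (m • x) w = m * inner2 x w := by
  simp only [inner2, Prod.smul_fst, Prod.smul_snd, smul_eq_mul]; ring

lemma inner2_neg_right (x w : ℤ × ℤ) : inner2 x (-w) = -inner2 x w := by
  simp only [inner2, Prod.fst_neg, Prod.snd_neg]; ring

def strip (u : ℤ × ℤ) (k : ℤ) : Set (ℤ × ℤ) :=
  { x | -k < inner2 x u ∧ inner2 x u < 0 }

lemma box_subset_strip (u : ℤ × ℤ) (k : ℤ) : Box u k ⊆ strip u k :=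
  fun _ hx => ⟨hx.1, hx.2.1⟩

lemma inner2_perp_ne_zero {u v : ℤ × ℤ} (hu : u ≠ 0) (hv : v ≠ 0) (huv : inner2 u v = 0) :
    inner2 (perp u) v ≠ 0 := by
  intro hs
  simp only [inner2, perp] at huv hs
  have hnorm : u.1 * u.1 + u.2 * u.2 ≠ 0 := by
    rw [Ne, mul_self_add_mul_self_eq_zero]
    exact fun h => hu (Prod.ext h.1 h.2)
  have hv1 : (u.1 * u.1 + u.2 * u.2) * v.1 = 0 := by linear_combination u.1 * huv + u.2 * hs
  have hv2 : (u.1 * u.1 + u.2 * u.2) * v.2 = 0 := by linear_combination u.2 * huv - u.1 * hs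
  exact hv (Prod.ext ((mul_eq_zero.1 hv1).resolve_left hnorm)
    ((mul_eq_zero.1 hv2).resolve_left hnorm))

lemma periodic_sub_of_diffOp_eq {v : ℤ × ℤ} {d e : ℤ × ℤ → ℤ} (hde : diffOp v d = diffOp v e) :
    Function.Periodic (d - e) v := by
  intro n
  have h := congrFun hde (n + v)
  simp only [diffOp, add_sub_cancel_right] at h
  simp only [Pi.sub_apply]
  linarith

lemma exists_add_zsmul_mem_box {u v : ℤ × ℤ} {k : ℤ} (huv : inner2 u v = 0)
    (hs : inner2 (perp u) v ≠ 0) (hk : |inner2 (perp u) v| ≤ k) {x : ℤ × ℤ}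
    (hx : x ∈ strip u k) : ∃ m : ℤ, x + m • v ∈ Box u k := by
  set s := inner2 (perp u) v
  set r := inner2 x (perp u)
  refine ⟨-(r / s), ?_⟩
  have hlevel : inner2 (x + -(r / s) • v) u = inner2 x u := by
    rw [inner2_add_left, inner2_zsmul_left, inner2_comm v, huv, mul_zero, add_zero]
  have hoffset : inner2 (x + -(r / s) • v) (perp u) = r % s := by
    rw [inner2_add_left, inner2_zsmul_left, inner2_comm v, Int.emod_def]; ring
  have hlt : r % s < |s| := by simpa using Int.emod_lt r hs
  have hnonneg : 0 ≤ r % s := Int.emod_nonneg r hs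
  refine ⟨?_, ?_, ?_, ?_⟩ <;> simp only [hlevel, hoffset] <;> linarith [hx.1, hx.2]

lemma eqOn_strip_of_eqOn_box {G : Type*} [AddGroup G] {u v : ℤ × ℤ} {k : ℤ}
    (huv : inner2 u v = 0) (hs : inner2 (perp u) v ≠ 0) (hk : |inner2 (perp u) v| ≤ k)
    {d e : ℤ × ℤ → G} (hper : Function.Periodic (d - e) v) (hB : Set.EqOn d e (Box u k)) :
    Set.EqOn d e (strip u k) := by
  intro x hx
  obtain ⟨m, hm⟩ := exists_add_zsmul_mem_box huv hs hk hx
  rw [← sub_eq_zero, ← Pi.sub_apply, ← hper.zsmul m x, Pi.sub_apply, hB hm, sub_self]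

section Propagation

variable {α : Type*} {X : Set (ℤ × ℤ → α)} (hX : ∀ c ∈ X, ∀ t, Translate t c ∈ X)
  {B : Set (ℤ × ℤ)} (hdet : ∀ d ∈ X, ∀ e ∈ X, Set.EqOn d e B → d 0 = e 0)
  {d e : ℤ × ℤ → α} (hd : d ∈ X) (he : e ∈ X)
include hX hdet hd he

lemma apply_eq_of_eqOn_add {x : ℤ × ℤ} (h : ∀ y ∈ B, d (y + x) = e (y + x)) : d x = e x := by
  have h0 := hdet _ (hX d hd (-x)) _ (hX e he (-x)) fun y hy => by
    simpa only [Translate, sub_neg_eq_add] using h y hy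
  simpa only [Translate, sub_neg_eq_add, zero_add] using h0

lemma eqOn_above_of_eqOn_strip {u : ℤ × ℤ} {k : ℤ} (hB : B ⊆ strip u k)
    (hstrip : Set.EqOn d e (strip u k)) : Set.EqOn d e { x | -k < inner2 x u } := by
  have hlevel : ∀ N : ℕ, ∀ x, -k < inner2 x u → inner2 x u < N → d x = e x := by
    intro N
    induction N with
    | zero => exact fun x h1 h2 => hstrip ⟨h1, by exact_mod_cast h2⟩
    | succ N ih =>
      intro x h1 h2
      rcases lt_or_eq_of_le (Int.lt_add_one_iff.1 (by push_cast at h2; exact h2)) with hlt | hN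
      · exact ih x h1 hlt
      · refine apply_eq_of_eqOn_add hX hdet hd he fun y hy => ih _ ?_ ?_ <;>
          rw [inner2_add_left, hN] <;> linarith [(hB hy).1, (hB hy).2, N.cast_nonneg (α := ℤ)]
  intro x hx
  exact hlevel ((inner2 x u).toNat + 1) x hx (by push_cast; omega)

end Propagation

theorem eqOn_halfPlane_of_eqOn_box_general
    (X : Set (ℤ × ℤ → ℤ)) (hX : IsSubshift X)
    (v : ℤ × ℤ) (hv : v ≠ 0) (u : ℤ × ℤ) (hu : u ≠ 0) (huv : inner2 u v = 0)
    (k : ℤ) (hk : |inner2 (perp u) v| < k)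
    (hdet : ∀ d ∈ X, ∀ e ∈ X, Set.EqOn d e (Box u k) → d 0 = e 0)
    (d : ℤ × ℤ → ℤ) (hd : d ∈ X) (e : ℤ × ℤ → ℤ) (he : e ∈ X)
    (hde : diffOp v d = diffOp v e)
    (hB : Set.EqOn d e (Box u k)) :
    Set.EqOn d e (halfPlane (-u)) := by
  have hstrip : Set.EqOn d e (strip u k) :=
    eqOn_strip_of_eqOn_box huv (inner2_perp_ne_zero hu hv huv) hk.le
      (periodic_sub_of_diffOp_eq hde) hB
  have habove := eqOn_above_of_eqOn_strip hX.2 hdet hd he (box_subset_strip u k) hstrip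
  intro x hx
  have hx' : 0 < inner2 x u := by
    simpa only [halfPlane, Set.mem_ofPred_eq, inner2_neg_right, neg_lt_zero] using hx
  exact habove (by linarith [abs_nonneg (inner2 (perp u) v)] : -k < inner2 x u)

/-- Let `X` be a subshift over a finite alphabet `A ⊆ ℤ`, `v ≠ 0`,
`u ≠ 0` with `⟨u,v⟩ = 0`, and `k > |⟨u^⊥,v⟩|` such that the box `B = B_u^k`
determines cell `0` in `X`. If `d, e ∈ X` satisfy `τ^v(d) − d = τ^v(e) − e` and
agree on `B`, then they agree on the half plane `H_{−u}`. -/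
theorem eqOn_halfPlane_of_eqOn_box
    (A : Finset ℤ) (X : Set (ℤ × ℤ → ℤ)) (hX : IsSubshift X)
    (hA : ∀ c ∈ X, ∀ n : ℤ × ℤ, c n ∈ A)
    (v : ℤ × ℤ) (hv : v ≠ 0) (u : ℤ × ℤ) (hu : u ≠ 0) (huv : inner2 u v = 0)
    (k : ℤ) (hk : |inner2 (perp u) v| < k)
    (hdet : ∀ d ∈ X, ∀ e ∈ X, Set.EqOn d e (Box u k) → d 0 = e 0)
    (d : ℤ × ℤ → ℤ) (hd : d ∈ X) (e : ℤ × ℤ → ℤ) (he : e ∈ X)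
    (hde : diffOp v d = diffOp v e)
    (hB : Set.EqOn d e (Box u k)) :
    Set.EqOn d e (halfPlane (-u)) :=
  eqOn_halfPlane_of_eqOn_box_general X hX v hv u hu huv k hk hdet d hd e he hde hB
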